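/- arXiv:0711.0070 — 3 statements merged into one kernel-verified Lean document; each statement's English description precedes it below -/
import Mathlib

section
/- In SL₃(ℂ), the map x_η : ℂ → SL₃(ℂ) defined by x_η(a) = x₁(a)·x₂(2a)·x₁(a), where x₁(a) = I + aE₁₂ and x₂(a) = I + aE₂₃, is a group homomorphism from the additive group ℂ, i.e. x_η(a+b) = x_η(a)·x_η(b) for all a, b ∈ ℂ. -/
/-!
Expanding the product, `x_η(a) = 1 + a N + a² N² / 2` with `N = 2 (E₁₂ + E₂₃)` and `N³ = 0`:
`x_η` is the one-parameter subgroup `a ↦ exp (a N)`. Writing `P = N² / 2`, multiplicativity of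
`t ↦ 1 + t N + t² P` only uses `N² = 2 P` and `N P = P N = P² = 0`, since then the cross term
`a b N²` of the product is exactly the `2 a b P` needed to complete `(a + b)² P`.
-/

/-- `x₁(a) = I + a·E₁₂`. -/
noncomputable def x₁ (a : ℂ) : Matrix (Fin 3) (Fin 3) ℂ :=
  1 + a • Matrix.single 0 1 1

/-- `x₂(a) = I + a·E₂₃`. -/
noncomputable def x₂ (a : ℂ) : Matrix (Fin 3) (Fin 3) ℂ :=
  1 + a • Matrix.single 1 2 1

/-- `x_η(a) = x₁(a)·x₂(2a)·x₁(a)`. -/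
noncomputable def xη (a : ℂ) : Matrix (Fin 3) (Fin 3) ℂ :=
  x₁ a * x₂ (2 * a) * x₁ a

section QuadUnipotent

variable {R A : Type*} [CommSemiring R] [Semiring A] [Algebra R A]

def quadUnipotent (N P : A) (t : R) : A :=
  1 + t • N + t ^ 2 • P

theorem quadUnipotent_add {N P : A} (hNN : N * N = (2 : R) • P) (hNP : N * P = 0)
    (hPN : P * N = 0) (hPP : P * P = 0) (a b : R) :
    quadUnipotent N P (a + b) = quadUnipotent N P a * quadUnipotent N P b := by
  simp only [quadUnipotent, mul_add, add_mul, one_mul, mul_one, smul_mul_smul_comm, hNN, hNP,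
    hPN, hPP, smul_zero, smul_smul]
  module

end QuadUnipotent

namespace XEta

open Matrix

noncomputable abbrev N : Matrix (Fin 3) (Fin 3) ℂ :=
  (2 : ℂ) • (single 0 1 1 + single 1 2 1)

noncomputable abbrev P : Matrix (Fin 3) (Fin 3) ℂ :=
  (2 : ℂ) • single 0 2 1

theorem N_mul_N : N * N = (2 : ℂ) • P := by
  simp (disch := decide) only [smul_mul_smul_comm, mul_add, add_mul, single_mul_single_same,
    single_mul_single_of_ne, add_zero, zero_add, mul_one, smul_smul]

theorem N_mul_P : N * P = 0 := by
  simp (disch := decide) only [smul_mul_smul_comm, add_mul, single_mul_single_of_ne, add_zero,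
    smul_zero]

theorem P_mul_N : P * N = 0 := by
  simp (disch := decide) only [smul_mul_smul_comm, mul_add, single_mul_single_of_ne, add_zero,
    smul_zero]

theorem P_mul_P : P * P = 0 := by
  simp (disch := decide) only [smul_mul_smul_comm, single_mul_single_of_ne, smul_zero]

theorem xη_eq_quadUnipotent (a : ℂ) : xη a = quadUnipotent N P a := by
  simp (disch := decide) only [xη, x₁, x₂, quadUnipotent, mul_add, add_mul, one_mul, mul_one,
    smul_mul_smul_comm, single_mul_single_same, single_mul_single_of_ne, smul_zero, add_zero]
  module

end XEta

theorem stmt1 (a b : ℂ) : xη (a + b) = xη a * xη b := by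
  simp only [XEta.xη_eq_quadUnipotent]
  exact quadUnipotent_add XEta.N_mul_N XEta.N_mul_P XEta.P_mul_N XEta.P_mul_P a b
end

section
/- Let σ be a Dynkin automorphism of a simply-laced root system with simple coroots α_i^∨, i ∈ I, and for a σ-orbit η define α_η^∨ = 2^h Σ_{i∈η} α_i^∨ where h = 1 if η = {i,j} with ⟨α_i^∨, α_j⟩ = -1 and h = 0 otherwise. Then for each orbit η, the reflection s_η (the longest element of the parabolic generated by {s_i : i ∈ η}) acts on the σ-fixed coweight lattice X_*^σ by μ ↦ μ - ⟨μ, α_η⟩ α_η^∨, where α_η is the common restriction of α_i (i ∈ η) to X_*^σ. -/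
/-!
A σ-fixed coweight μ pairs with every α_i, i ∈ η, to the same integer c, since σ acts
transitively on η. If the roots of η are pairwise orthogonal, the reflections s_i commute and
their product subtracts Σ_{i∈η} ⟨μ, α_i⟩ α_i^∨ = c Σ_{i∈η} α_i^∨. Otherwise η = {a, b} spans an
A₂ subsystem, σ swaps a and b, and the direct computation of s_a s_b s_a μ gives
μ - 2c (α_a^∨ + α_b^∨).
-/

def IsForwardOrbit {I : Type*} (σ : Equiv.Perm I) (η : Finset I) : Prop :=
  ∃ i₀ ∈ η, ∀ i, i ∈ η ↔ ∃ n : ℕ, (⇑σ)^[n] i₀ = i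

namespace IsForwardOrbit

variable {I : Type*} {σ : Equiv.Perm I} {η : Finset I}

theorem apply_mem (h : IsForwardOrbit σ η) {k : I} (hk : k ∈ η) : σ k ∈ η := by
  obtain ⟨i₀, -, hη⟩ := h
  obtain ⟨n, rfl⟩ := (hη k).1 hk
  exact (hη _).2 ⟨n + 1, Function.iterate_succ_apply' _ _ _⟩

theorem eq_of_forall_apply_eq {M : Type*} (h : IsForwardOrbit σ η) (f : I → M)
    (hf : ∀ k ∈ η, f (σ k) = f k) {j k : I} (hj : j ∈ η) (hk : k ∈ η) : f j = f k := by
  obtain ⟨i₀, hi₀, hη⟩ := h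
  have hiter : ∀ n, (⇑σ)^[n] i₀ ∈ η ∧ f ((⇑σ)^[n] i₀) = f i₀ := by
    intro n
    induction n with
    | zero => exact ⟨hi₀, rfl⟩
    | succ n ih =>
      rw [Function.iterate_succ_apply']
      exact ⟨(hη _).2 ⟨n + 1, Function.iterate_succ_apply' _ _ _⟩, (hf _ ih.1).trans ih.2⟩
  obtain ⟨m, rfl⟩ := (hη j).1 hj
  obtain ⟨n, rfl⟩ := (hη k).1 hk
  rw [(hiter m).2, (hiter n).2]

theorem apply_eq_of_eq_pair [DecidableEq I] (h : IsForwardOrbit σ η) {a b : I} (hab : a ≠ b)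
    (hη : η = {a, b}) : σ a = b := by
  subst hη
  have hmem : ∀ k ∈ ({a, b} : Finset I), σ k = a ∨ σ k = b := fun k hk => by
    simpa using h.apply_mem hk
  rcases hmem a (by simp) with ha | ha
  · have hb : σ b = b :=
      (hmem b (by simp)).resolve_left fun hb => hab (σ.injective (ha.trans hb.symm))
    have hfix : ∀ k ∈ ({a, b} : Finset I), σ k = k := by simp [ha, hb]
    exact absurd (h.eq_of_forall_apply_eq id hfix (by simp) (by simp)) hab
  · exact ha

end IsForwardOrbit

section Reflections

variable {X I : Type*} [AddCommGroup X] [Module ℤ X]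
  {α : I → (X →ₗ[ℤ] ℤ)} {αv : I → X} {s : I → (X →ₗ[ℤ] X)}

theorem prod_reflections_apply_of_orthogonal [DecidableEq I]
    (hs : ∀ i μ, s i μ = μ - α i μ • αv i) {l : List I} (hl : l.Nodup)
    (horth : ∀ i ∈ l, ∀ j ∈ l, i ≠ j → α j (αv i) = 0) (μ : X) :
    (l.map s).prod μ = μ - ∑ k ∈ l.toFinset, α k μ • αv k := by
  rw [List.sum_toFinset _ hl]
  induction l with
  | nil => simp
  | cons k t ih =>
    obtain ⟨hkt, ht⟩ := List.nodup_cons.1 hl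
    have hzero : α k ((t.map fun j => α j μ • αv j).sum) = 0 := by
      rw [map_list_sum, List.map_map]
      refine List.sum_eq_zero fun x hx => ?_
      obtain ⟨j, hj, rfl⟩ := List.mem_map.1 hx
      have hjk : j ≠ k := fun hjk => hkt (hjk ▸ hj)
      simp [horth j (by simp [hj]) k (by simp) hjk]
    rw [List.map_cons, List.prod_cons, Module.End.mul_apply,
      ih ht fun i hi j hj => horth i (by simp [hi]) j (by simp [hj]), hs, map_sub, hzero,
      sub_zero, List.map_cons, List.sum_cons]
    abel

theorem reflection_braid_apply_of_A₂ (hs : ∀ i μ, s i μ = μ - α i μ • αv i) {a b : I}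
    (ha : α a (αv a) = 2) (hab : α a (αv b) = -1) (hba : α b (αv a) = -1)
    {μ : X} (hμ : α b μ = α a μ) :
    s a (s b (s a μ)) = μ - α a μ • (2 : ℤ) • (αv a + αv b) := by
  set c := α a μ
  have h₁ : s a μ = μ - c • αv a := hs a μ
  have h₂ : s b (s a μ) = μ - c • αv a - (2 * c) • αv b := by
    rw [h₁, hs, map_sub, map_zsmul, hμ, hba, smul_eq_mul]
    congr 2
    ring
  have h₃ : α a (μ - c • αv a - (2 * c) • αv b) = c := by
    simp only [map_sub, map_zsmul, ha, hab, smul_eq_mul]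
    ring
  rw [h₂, hs, h₃]
  -- `•` is the ℤ-action of the additive group, not the one of `[Module ℤ X]` that `module` uses
  simp only [← Int.cast_smul_eq_zsmul ℤ, Int.cast_id]
  module

end Reflections

theorem stmt10_general {X : Type*} [AddCommGroup X] [Module ℤ X]
    {I : Type*} [DecidableEq I]
    (α : I → (X →ₗ[ℤ] ℤ)) (αv : I → X)
    (hdiag : ∀ i, α i (αv i) = 2)
    (s : I → (X →ₗ[ℤ] X))
    (hs : ∀ i μ, s i μ = μ - α i μ • αv i)
    (σI : Equiv.Perm I) (σX : X ≃ₗ[ℤ] X)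
    (hσv : ∀ i, σX (αv i) = αv (σI i))
    (hσα : ∀ i μ, α (σI i) (σX μ) = α i μ)
    (η : Finset I)
    (horb : ∃ i₀ ∈ η, ∀ i, i ∈ η ↔ ∃ n : ℕ, (⇑σI)^[n] i₀ = i)  -- η is a σ-orbit
    (sη : X →ₗ[ℤ] X) (αηv : X)
    -- s_η is the longest element of the parabolic generated by {s_i : i ∈ η}, and
    -- α_η^∨ = 2^h Σ_{i∈η} α_i^∨ :
    (hcase :
      (∃ i j, i ≠ j ∧ η = {i, j} ∧ α j (αv i) = -1 ∧
        sη = s i ∘ₗ s j ∘ₗ s i ∧ αηv = (2 : ℤ) • ∑ k ∈ η, αv k)    -- h = 1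
      ∨ ((∀ i ∈ η, ∀ j ∈ η, i ≠ j → α j (αv i) = 0) ∧
        (∃ l : List I, l.Nodup ∧ l.toFinset = η ∧ sη = (l.map s).prod) ∧
        αηv = ∑ k ∈ η, αv k)) :                                     -- h = 0
    ∀ μ : X, σX μ = μ → ∀ i ∈ η, sη μ = μ - α i μ • αηv := by
  intro μ hμ i hi
  have horb' : IsForwardOrbit σI η := horb
  have hconst : ∀ j ∈ η, α j μ = α i μ := fun j hj =>
    horb'.eq_of_forall_apply_eq (fun k => α k μ) (fun k _ => by rw [← hσα k μ, hμ]) hj hi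
  rcases hcase with ⟨a, b, hab, rfl, hba, rfl, rfl⟩ | ⟨horth, ⟨l, hl, rfl, rfl⟩, rfl⟩
  · have hσa : σI a = b := horb'.apply_eq_of_eq_pair hab rfl
    have hσb : σI b = a := horb'.apply_eq_of_eq_pair hab.symm (Finset.pair_comm a b)
    have hab' : α a (αv b) = -1 := by rw [← hσα a (αv b), hσv, hσa, hσb, hba]
    rw [Finset.sum_pair hab, ← hconst a (by simp), LinearMap.comp_apply, LinearMap.comp_apply]
    exact reflection_braid_apply_of_A₂ hs (hdiag a) hab' hba
      ((hconst b (by simp)).trans (hconst a (by simp)).symm)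
  · have hsum : ∑ k ∈ l.toFinset, α k μ • αv k = α i μ • ∑ k ∈ l.toFinset, αv k :=
      calc ∑ k ∈ l.toFinset, α k μ • αv k = ∑ k ∈ l.toFinset, α i μ • αv k :=
            Finset.sum_congr rfl fun k hk => by rw [hconst k hk]
        _ = α i μ • ∑ k ∈ l.toFinset, αv k := (map_sum (zsmulAddGroupHom (α i μ)) αv _).symm
    rw [prod_reflections_apply_of_orthogonal hs hl
      (fun i hi j hj => horth i (by simpa using hi) j (by simpa using hj)), hsum]

theorem stmt10 {X : Type*} [AddCommGroup X] [Module ℤ X]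
    {I : Type*} [Fintype I] [DecidableEq I]
    (α : I → (X →ₗ[ℤ] ℤ)) (αv : I → X)
    (hdiag : ∀ i, α i (αv i) = 2)
    (hlaced : ∀ i j, i ≠ j → α j (αv i) = 0 ∨ α j (αv i) = -1)  -- simply laced
    (s : I → (X →ₗ[ℤ] X))
    (hs : ∀ i μ, s i μ = μ - α i μ • αv i)
    (σI : Equiv.Perm I) (σX : X ≃ₗ[ℤ] X)
    (hσv : ∀ i, σX (αv i) = αv (σI i))
    (hσα : ∀ i μ, α (σI i) (σX μ) = α i μ)
    (η : Finset I)
    (horb : ∃ i₀ ∈ η, ∀ i, i ∈ η ↔ ∃ n : ℕ, (⇑σI)^[n] i₀ = i)  -- η is a σ-orbit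
    (sη : X →ₗ[ℤ] X) (αηv : X)
    -- s_η is the longest element of the parabolic generated by {s_i : i ∈ η}, and
    -- α_η^∨ = 2^h Σ_{i∈η} α_i^∨ :
    (hcase :
      (∃ i j, i ≠ j ∧ η = {i, j} ∧ α j (αv i) = -1 ∧
        sη = s i ∘ₗ s j ∘ₗ s i ∧ αηv = (2 : ℤ) • ∑ k ∈ η, αv k)    -- h = 1
      ∨ ((∀ i ∈ η, ∀ j ∈ η, i ≠ j → α j (αv i) = 0) ∧
        (∃ l : List I, l.Nodup ∧ l.toFinset = η ∧ sη = (l.map s).prod) ∧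
        αηv = ∑ k ∈ η, αv k)) :                                     -- h = 0
    ∀ μ : X, σX μ = μ → ∀ i ∈ η, sη μ = μ - α i μ • αηv :=
  stmt10_general α αv hdiag s hs σI σX hσv hσα η horb sη αηv hcase
end

section
/- Let σ be a Dynkin automorphism of an almost simple simply-laced root system. Then (X_*^σ, Hom(X_*^σ, ℤ), α_η^∨, α_η ; η ∈ I_σ) as defined by folding is a root datum whose Cartan matrix ⟨α_η^∨, α_{η'}⟩ is a Cartan matrix of finite type. Specifically, the folding of A_{2n-1}, D_{n+1}, E₆, D₄ (with automorphism of order 2, 2, 2, 3 respectively) yields Cartan matrices of types C_n, B_n, F₄, G₂, and the folding of A_{2n} yields B_n. -/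
/- STATEMENT 11: Folding of simply-laced Cartan matrices by a Dynkin automorphism.
All Cartan matrices are encoded as functions ℕ → ℕ → ℤ, only the entries with indices
below the rank being relevant.  For a diagram automorphism σ with orbits O j (j running
over an index set of orbits, with representatives r j), the folded Cartan matrix is
⟨α_η^∨, α_{η'}⟩ = 2^{h(η)} Σ_{i∈η} a_{i, r(η')}, where h(η) = 1 if η is a pair of
adjacent nodes and h(η) = 0 otherwise.  The claim: folding A_{2n-1}, D_{n+1}, E₆, D₄
(by the automorphism of order 2, 2, 2, 3 respectively) yields the Cartan matrices of types
C_n, B_n, F₄, G₂, and folding A_{2n} yields B_n. -/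

/-- The Cartan matrix of type A (any rank): chain 0 - 1 - ⋯. -/
def cartanA : ℕ → ℕ → ℤ := fun i j =>
  if i = j then 2 else if i + 1 = j ∨ j + 1 = i then -1 else 0

/-- The Cartan matrix of type Bₙ: chain with ⟨α_{n-1}^∨, α_{n-2}⟩ = -2 (last root short). -/
def cartanB (n : ℕ) : ℕ → ℕ → ℤ := fun i j =>
  if i = j then 2 else if i + 1 = n ∧ j + 2 = n then -2
    else if i + 1 = j ∨ j + 1 = i then -1 else 0

/-- The Cartan matrix of type Cₙ: chain with ⟨α_{n-2}^∨, α_{n-1}⟩ = -2 (last root long). -/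
def cartanC (n : ℕ) : ℕ → ℕ → ℤ := fun i j =>
  if i = j then 2 else if j + 1 = n ∧ i + 2 = n then -2
    else if i + 1 = j ∨ j + 1 = i then -1 else 0

/-- The Cartan matrix of type Dₘ: chain 0 - 1 - ⋯ - (m-3) with both m-2 and m-1
attached to the node m-3. -/
def cartanD (m : ℕ) : ℕ → ℕ → ℤ := fun i j =>
  if i = j then 2
    else if (i + 1 = j ∧ j + 2 ≤ m) ∨ (j + 1 = i ∧ i + 2 ≤ m) ∨
      (i + 3 = m ∧ j + 1 = m) ∨ (j + 3 = m ∧ i + 1 = m) then -1 else 0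

/-- The Cartan matrix of type E₆: chain 0 - 1 - 2 - 3 - 4 with node 5 attached to node 2. -/
def cartanE6 : ℕ → ℕ → ℤ := fun i j =>
  if i = j then 2
    else if (i, j) = (0, 1) ∨ (i, j) = (1, 2) ∨ (i, j) = (2, 3) ∨ (i, j) = (3, 4) ∨
      (i, j) = (2, 5) ∨ (j, i) = (0, 1) ∨ (j, i) = (1, 2) ∨ (j, i) = (2, 3) ∨
      (j, i) = (3, 4) ∨ (j, i) = (2, 5) then -1 else 0

/-- The Cartan matrix of type F₄: chain 0 - 1 ⇒ 2 - 3 with ⟨α₁^∨, α₂⟩ = -2. -/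
def cartanF4 : ℕ → ℕ → ℤ := fun i j =>
  if i = j then 2 else if (i, j) = (1, 2) then -2
    else if i + 1 = j ∨ j + 1 = i then -1 else 0

/-- The Cartan matrix of type G₂. -/
def cartanG2 : ℕ → ℕ → ℤ := fun i j =>
  if i = j then 2 else if (i, j) = (0, 1) then -3 else if (i, j) = (1, 0) then -1 else 0

/-- The folded Cartan matrix `⟨α_η^∨, α_{η'}⟩ = 2^{h(η)} Σ_{i∈η} a_{i, r(η')}`, where the
σ-orbits are `O j` with representatives `r j`, and `h j = 1` exactly when the orbit `O j`
consists of two adjacent nodes (so that `α_η^∨ = 2^h Σ_{i∈η} α_i^∨`). -/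
def foldedCartan (A : ℕ → ℕ → ℤ) (O : ℕ → Finset ℕ) (h : ℕ → ℕ) (r : ℕ → ℕ) :
    ℕ → ℕ → ℤ :=
  fun j k => 2 ^ (h j) * ∑ i ∈ O j, A i (r k)

theorem stmt11 :
    -- folding A_{2n-1} by the order-2 automorphism i ↦ 2n-2-i yields C_n
    (∀ n : ℕ, 1 ≤ n → ∀ j k : ℕ, j < n → k < n →
      foldedCartan cartanA (fun j => {j, 2 * n - 2 - j}) (fun _ => 0) id j k
        = cartanC n j k) ∧
    -- folding A_{2n} by the order-2 automorphism i ↦ 2n-1-i yields B_n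
    -- (the middle orbit {n-1, n} consists of adjacent nodes, so h = 1 there)
    (∀ n : ℕ, 1 ≤ n → ∀ j k : ℕ, j < n → k < n →
      foldedCartan cartanA (fun j => {j, 2 * n - 1 - j})
        (fun j => if j + 1 = n then 1 else 0) id j k = cartanB n j k) ∧
    -- folding D_{n+1} by the order-2 automorphism swapping the fork nodes yields B_n
    (∀ n : ℕ, 2 ≤ n → ∀ j k : ℕ, j < n → k < n →
      foldedCartan (cartanD (n + 1))
        (fun j => if j + 1 = n then {n - 1, n} else {j}) (fun _ => 0) id j k
        = cartanB n j k) ∧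
    -- folding E₆ by the order-2 automorphism (orbits {0,4}, {1,3}, {2}, {5}) yields F₄
    (∀ j k : ℕ, j < 4 → k < 4 →
      foldedCartan cartanE6
        (fun j => if j = 0 then {0, 4} else if j = 1 then {1, 3} else if j = 2 then {2} else {5})
        (fun _ => 0) (fun k => if k = 3 then 5 else k) j k = cartanF4 j k) ∧
    -- folding D₄ by the order-3 automorphism (orbits {0,2,3}, {1}) yields G₂
    (∀ j k : ℕ, j < 2 → k < 2 →
      foldedCartan (cartanD 4) (fun j => if j = 0 then {0, 2, 3} else {1})
        (fun _ => 0) (fun k => k) j k = cartanG2 j k) := by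
  refine ⟨?_, ?_, ?_, ?_, ?_⟩
  · intro n hn j k hj hk
    simp only [foldedCartan, pow_zero, one_mul, id]
    rcases eq_or_ne j (2 * n - 2 - j) with h | h
    · rw [show ({j, 2 * n - 2 - j} : Finset ℕ) = {j} by rw [← h]; simp,
        Finset.sum_singleton]
      simp only [cartanA, cartanC]
      split_ifs <;> omega
    · rw [Finset.sum_pair h]
      simp only [cartanA, cartanC]
      split_ifs <;> omega
  · intro n hn j k hj hk
    simp only [foldedCartan, id]
    have h : j ≠ 2 * n - 1 - j := by omega
    rw [Finset.sum_pair h]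
    simp only [cartanA, cartanB]
    split_ifs <;> simp only [pow_one, pow_zero, one_mul] <;> omega
  · intro n hn j k hj hk
    simp only [foldedCartan, pow_zero, one_mul, id]
    rcases eq_or_ne (j + 1) n with h | h
    · rw [if_pos h, Finset.sum_pair (by omega : n - 1 ≠ n)]
      simp only [cartanD, cartanB]
      split_ifs <;> first | omega | (simp_all; omega) | simp_all
    · rw [if_neg h, Finset.sum_singleton]
      simp only [cartanD, cartanB]
      split_ifs <;> first | omega | (simp_all; omega) | simp_all
  · intro j k hj hk
    interval_cases j <;> interval_cases k <;> decide
  · intro j k hj hk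
    interval_cases j <;> interval_cases k <;> decide
end
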